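/- arXiv:1904.03558 — 2 statements merged into one kernel-verified Lean document; each statement's English description precedes it below -/
import Mathlib

section
/- Let G be an acyclic transitive digraph on a finite vertex set V and let S be a subgraph of G. Then S is a locally maximal 2-dimensional subgraph of G (a 2-dimensional subgraph not strictly contained in any 2-dimensional subgraph of G) if and only if ucl(S) is a locally maximal permutation subgraph of ucl(G) (an undirected subgraph of ucl(G) that is a permutation graph and is not strictly contained in any undirected subgraph of ucl(G) that is a permutation graph). -/
/-- Undirected closure of a digraph: `E ∪ E⁻¹`. -/
def ucl {V : Type*} (E : V → V → Prop) : V → V → Prop := fun a b => E a b ∨ E b a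

/-- Complement of a digraph: all pairs of distinct vertices not in `ucl E`. -/
def cmpl {V : Type*} (E : V → V → Prop) : V → V → Prop := fun a b => a ≠ b ∧ ¬ ucl E a b

/-- A digraph is oriented iff `E ∩ E⁻¹ = ∅`. -/
def Oriented {V : Type*} (E : V → V → Prop) : Prop := ∀ a b, E a b → ¬ E b a

/-- `O` is an orientation of `E`: a maximal oriented subset of `E`. -/
def IsOrientation {V : Type*} (O E : V → V → Prop) : Prop :=
  (∀ a b, O a b → E a b) ∧ Oriented O ∧
    ∀ O' : V → V → Prop, (∀ a b, O' a b → E a b) → Oriented O' →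
      (∀ a b, O a b → O' a b) → ∀ a b, O' a b → O a b

/-- Transitivity of a digraph: `(a,b) ∈ E`, `(b,c) ∈ E` and `a ≠ c` imply `(a,c) ∈ E`. -/
def TransD {V : Type*} (E : V → V → Prop) : Prop :=
  ∀ a b c, E a b → E b c → a ≠ c → E a c

/-- Transitive closure of a digraph. -/
def tcl {V : Type*} (E : V → V → Prop) : V → V → Prop := Relation.TransGen E

/-- A digraph is acyclic iff its transitive closure is irreflexive. -/
def Acyclic {V : Type*} (E : V → V → Prop) : Prop := Irreflexive (tcl E)

/-- A transitive orientation of `E` is an orientation of `E` that is transitive. -/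
def IsTransOrientation {V : Type*} (O E : V → V → Prop) : Prop :=
  IsOrientation O E ∧ TransD O

/-- `E` is transitively orientable iff it has a transitive orientation. -/
def TransOrientable {V : Type*} (E : V → V → Prop) : Prop := ∃ O, IsTransOrientation O E

/-- `L` is a strict linear order on the vertex set. -/
def IsStrictLinear {V : Type*} (L : V → V → Prop) : Prop :=
  Irreflexive L ∧ Transitive L ∧ ∀ a b : V, a ≠ b → L a b ∨ L b a

/-- `E` is 2-dimensional: the intersection of two strict linear orders. -/
def TwoDim {V : Type*} (E : V → V → Prop) : Prop :=
  ∃ L₁ L₂ : V → V → Prop, IsStrictLinear L₁ ∧ IsStrictLinear L₂ ∧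
    ∀ a b, E a b ↔ L₁ a b ∧ L₂ a b

/-- Direct forcing `Γ` between edges of an undirected graph `E`:
`(a,b) Γ (c,d)` iff both are edges of `E` and either `a = c` with `b, d` non-adjacent,
or `b = d` with `a, c` non-adjacent. -/
def Forces {V : Type*} (E : V → V → Prop) (e f : V × V) : Prop :=
  E e.1 e.2 ∧ E f.1 f.2 ∧
    ((e.1 = f.1 ∧ e.2 ≠ f.2 ∧ ¬ E e.2 f.2) ∨ (e.2 = f.2 ∧ e.1 ≠ f.1 ∧ ¬ E e.1 f.1))

/-- `S` is a 2-dimensional subgraph of `G`: a subgraph that is a 2-dimensional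
acyclic transitive digraph. -/
def TwoDimSubgraph {V : Type*} (G S : V → V → Prop) : Prop :=
  (∀ a b, S a b → G a b) ∧ Irreflexive S ∧ TransD S ∧ Acyclic S ∧ TwoDim S

/-- A permutation graph: an undirected graph such that both it and its complement
are transitively orientable. -/
def PermGraph {V : Type*} (E : V → V → Prop) : Prop :=
  Irreflexive E ∧ (∀ a b, E a b → E b a) ∧ TransOrientable E ∧ TransOrientable (cmpl E)

/-- `S` is a permutation subgraph of `G`: an undirected subgraph of `G` that is a
permutation graph. -/
def PermSubgraph {V : Type*} (G S : V → V → Prop) : Prop :=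
  (∀ a b, S a b → G a b) ∧ PermGraph S

/-!
A 2-dimensional order `S = L₁ ∩ L₂` makes `ucl S` a permutation graph: `S` orients `ucl S`
and `L₁ ∩ L₂⁻¹` transitively orients its complement. Conversely, if `F` and `F'` transitively
orient a permutation graph `T` and its complement, then `F ∪ F'` and `F ∪ F'⁻¹` are linear
orders realising `F`. The orientation `D = G ∩ T` that `G` induces on `T ⊆ ucl G` need not be
transitive, but its transitive closure `P` stays inside `G` and is again 2-dimensional: the
pairs `a <₁ b`, `b <₂ a` that `P` leaves incomparable form a transitive relation `Q`, because a
`D`-path from a point left of `b` to a point right of `b` must pass through a point comparable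
with `b`. Then `P = (P ∪ Q) ∩ (P ∪ Q⁻¹)`. Since `G` is oriented, a subgraph of `G` is determined
by its undirected closure, and the two maximality notions correspond.
-/

section Digraph

variable {V : Type*}

lemma Oriented.irreflexive {E : V → V → Prop} (h : Oriented E) : Irreflexive E :=
  fun a hab => h a a hab hab

lemma Acyclic.oriented {E : V → V → Prop} (h : Acyclic E) : Oriented E :=
  fun a _ hab hba => h a (Relation.TransGen.head hab (.single hba))

lemma TransD.transitive {E : V → V → Prop} (htr : TransD E) (hor : Oriented E) :
    Transitive E := by
  intro a b c hab hbc
  by_cases hac : a = c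
  · subst hac
    exact (hor a b hab hbc).elim
  · exact htr a b c hab hbc hac

lemma le_of_ucl_le {G A B : V → V → Prop} (hG : Oriented G) (hA : ∀ a b, A a b → G a b)
    (hB : ∀ a b, B a b → G a b) (h : ∀ a b, ucl A a b → ucl B a b) (a b : V) (hab : A a b) :
    B a b :=
  (h a b (Or.inl hab)).resolve_right fun hba => hG a b (hA a b hab) (hB b a hba)

lemma isOrientation_of_total {O E : V → V → Prop} (hOE : ∀ a b, O a b → E a b)
    (hor : Oriented O) (htot : ∀ a b, E a b → O a b ∨ O b a) : IsOrientation O E := by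
  refine ⟨hOE, hor, fun O' hO'E hor' hOO' a b hab => ?_⟩
  exact (htot a b (hO'E a b hab)).resolve_right fun hba => hor' a b hab (hOO' b a hba)

lemma IsOrientation.total {O E : V → V → Prop} (h : IsOrientation O E) {a b : V}
    (hab : E a b) (hne : a ≠ b) : O a b ∨ O b a := by
  by_contra! hc
  obtain ⟨hOE, hor, hmax⟩ := h
  let O' : V → V → Prop := fun x y => O x y ∨ (x = a ∧ y = b)
  have hO'E : ∀ x y, O' x y → E x y := by
    rintro x y (hxy | ⟨rfl, rfl⟩)
    exacts [hOE x y hxy, hab]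
  have hor' : Oriented O' := by
    rintro x y (hxy | ⟨rfl, rfl⟩) (hyx | ⟨hya, hxb⟩)
    · exact hor x y hxy hyx
    · exact hc.2 (hya ▸ hxb ▸ hxy)
    · exact hc.2 hyx
    · exact hne hxb
  exact hc.1 (hmax O' hO'E hor' (fun x y => Or.inl) a b (Or.inr ⟨rfl, rfl⟩))

lemma isStrictLinear_sup {P Q : V → V → Prop} (hP : Transitive P) (hPirr : Irreflexive P)
    (hQ : Transitive Q) (hQirr : Irreflexive Q) (hdisj : ∀ a b, P a b → ¬ Q a b ∧ ¬ Q b a)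
    (hcov : ∀ a b, a ≠ b → P a b ∨ P b a ∨ Q a b ∨ Q b a) :
    IsStrictLinear (fun a b => P a b ∨ Q a b) := by
  refine ⟨fun a h => h.elim (hPirr a) (hQirr a), ?_, fun a b hne => ?_⟩
  · rintro a b c (hab | hab) (hbc | hbc)
    · exact .inl (hP hab hbc)
    · rcases eq_or_ne a c with rfl | hac
      · exact ((hdisj a b hab).2 hbc).elim
      rcases hcov a c hac with h | h | h | h
      · exact .inl h
      · exact ((hdisj c b (hP h hab)).2 hbc).elim
      · exact .inr h
      · exact ((hdisj a b hab).2 (hQ hbc h)).elim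
    · rcases eq_or_ne a c with rfl | hac
      · exact ((hdisj b a hbc).2 hab).elim
      rcases hcov a c hac with h | h | h | h
      · exact .inl h
      · exact ((hdisj b a (hP hbc h)).2 hab).elim
      · exact .inr h
      · exact ((hdisj b c hbc).2 (hQ h hab)).elim
    · exact .inr (hQ hab hbc)
  · rcases hcov a b hne with h | h | h | h
    exacts [.inl (.inl h), .inr (.inl h), .inl (.inr h), .inr (.inr h)]

end Digraph

section TwoDimToPerm

variable {V : Type*}

lemma isTransOrientation_ucl {S : V → V → Prop} (hor : Oriented S) (htr : TransD S) :
    IsTransOrientation S (ucl S) :=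
  ⟨isOrientation_of_total (fun _ _ => Or.inl) hor fun _ _ => id, htr⟩

lemma TwoDim.transOrientable_cmpl_ucl {S : V → V → Prop} (hS : TwoDim S) :
    TransOrientable (cmpl (ucl S)) := by
  obtain ⟨L₁, L₂, ⟨irr₁, tr₁, tot₁⟩, ⟨irr₂, tr₂, tot₂⟩, hSL⟩ := hS
  refine ⟨fun a b => L₁ a b ∧ L₂ b a, isOrientation_of_total ?_ ?_ ?_, ?_⟩
  · rintro a b ⟨hab₁, hba₂⟩
    refine ⟨fun h => irr₁ a (h ▸ hab₁), fun hadj => ?_⟩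
    rcases (hadj : ucl S a b ∨ ucl S b a) with h | h <;> rcases h with h | h
    all_goals first
      | exact irr₂ a (tr₂ ((hSL a b).1 h).2 hba₂)
      | exact irr₁ a (tr₁ hab₁ ((hSL b a).1 h).1)
  · exact fun a b hab hba => irr₁ a (tr₁ hab.1 hba.1)
  · rintro a b ⟨hne, hnadj⟩
    have hnS : ¬ S a b ∧ ¬ S b a := not_or.1 fun h => hnadj (.inl h)
    rcases tot₁ a b hne with h₁ | h₁ <;> rcases tot₂ a b hne with h₂ | h₂
    · exact (hnS.1 ((hSL a b).2 ⟨h₁, h₂⟩)).elim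
    · exact .inl ⟨h₁, h₂⟩
    · exact .inr ⟨h₁, h₂⟩
    · exact (hnS.2 ((hSL b a).2 ⟨h₁, h₂⟩)).elim
  · exact fun a b c hab hbc _ => ⟨tr₁ hab.1 hbc.1, tr₂ hbc.2 hab.2⟩

lemma TwoDimSubgraph.permSubgraph_ucl {G S : V → V → Prop} (h : TwoDimSubgraph G S) :
    PermSubgraph (ucl G) (ucl S) := by
  obtain ⟨hSG, -, htr, hacyc, hS⟩ := h
  have hor := hacyc.oriented
  refine ⟨fun a b => Or.imp (hSG a b) (hSG b a), fun a h => ?_, fun _ _ => Or.symm,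
    ⟨S, isTransOrientation_ucl hor htr⟩, hS.transOrientable_cmpl_ucl⟩
  exact h.elim (hor.irreflexive a) (hor.irreflexive a)

end TwoDimToPerm

section PermToTwoDim

variable {V : Type*}

lemma PermGraph.exists_twoDim {T : V → V → Prop} (hT : PermGraph T) :
    ∃ K, TwoDim K ∧ ∀ a b, T a b ↔ ucl K a b := by
  obtain ⟨hirr, hsymm, ⟨F, hFO, hFtr⟩, ⟨F', hF'O, hF'tr⟩⟩ := hT
  have hFT : ∀ a b, F a b → T a b := hFO.1
  have hF'T : ∀ a b, F' a b → a ≠ b ∧ ¬ ucl T a b := hF'O.1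
  have hFtrans := hFtr.transitive hFO.2.1
  have hF'trans := hF'tr.transitive hF'O.2.1
  have hFirr := hFO.2.1.irreflexive
  have hF'irr := hF'O.2.1.irreflexive
  have hdisj : ∀ a b, F a b → ¬ F' a b ∧ ¬ F' b a := fun a b hab =>
    ⟨fun h => (hF'T a b h).2 (.inl (hFT a b hab)),
      fun h => (hF'T b a h).2 (.inr (hFT a b hab))⟩
  have hcov : ∀ a b, a ≠ b → F a b ∨ F b a ∨ F' a b ∨ F' b a := by
    intro a b hne
    by_cases hab : ucl T a b
    · have hab' : T a b := hab.elim id (hsymm b a)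
      exact (hFO.total hab' hne).elim .inl (.inr ∘ .inl)
    · exact .inr (.inr (hF'O.total ⟨hne, hab⟩ hne))
  have hL₁ := isStrictLinear_sup hFtrans hFirr hF'trans hF'irr hdisj hcov
  have hL₂ := isStrictLinear_sup (Q := flip F') hFtrans hFirr
    (fun _ _ _ hab hbc => hF'trans hbc hab) hF'irr (fun a b h => (hdisj a b h).symm)
    fun a b hne => (hcov a b hne).imp_right (Or.imp_right Or.symm)
  refine ⟨F, ⟨_, _, hL₁, hL₂, fun a b => ⟨fun h => ⟨.inl h, .inl h⟩, ?_⟩⟩, fun a b => ⟨?_, ?_⟩⟩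
  · rintro ⟨h | h, h' | h'⟩
    exacts [h, h, h', (hF'O.2.1 a b h h').elim]
  · intro hab
    exact hFO.total hab fun h => hirr a (h ▸ hab)
  · exact fun h => h.elim (hFT a b) fun hba => hsymm b a (hFT b a hba)

/-- A single `D`-edge cannot join a point left of `b` (`L₁`-below, `L₂`-above) to a point right
of `b`, so a `D`-path between two such points meets a point `D`-adjacent to `b`. -/
lemma tcl_crossing {L₁ L₂ D : V → V → Prop} (h₁ : IsStrictLinear L₁) (h₂ : IsStrictLinear L₂)
    (hD : ∀ a b, ucl D a b ↔ ucl (fun x y => L₁ x y ∧ L₂ x y) a b) {u w b : V}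
    (huw : tcl D u w) (hu : L₁ u b ∧ L₂ b u) (hw : L₁ b w ∧ L₂ w b) :
    tcl D u b ∨ tcl D b w := by
  obtain ⟨irr₁, tr₁, tot₁⟩ := h₁
  obtain ⟨irr₂, tr₂, tot₂⟩ := h₂
  have no_jump : ∀ x y, D x y → L₁ x b → L₂ b x → L₁ b y → L₂ y b → False := by
    intro x y hxy hx₁ hx₂ hy₁ hy₂
    rcases (hD x y).1 (.inl hxy) with h | h
    · exact irr₂ y (tr₂ hy₂ (tr₂ hx₂ h.2))
    · exact irr₁ x (tr₁ hx₁ (tr₁ hy₁ h.1))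
  induction huw using Relation.TransGen.head_induction_on with
  | single hxw => exact (no_jump _ _ hxw hu.1 hu.2 hw.1 hw.2).elim
  | @head x v hxv hvw ih =>
    rcases eq_or_ne v b with rfl | hvb
    · exact .inl (.single hxv)
    have hD_vb : ucl (fun x y => L₁ x y ∧ L₂ x y) v b → tcl D x b ∨ tcl D b w := fun h =>
      ((hD v b).2 h).imp (fun hvb => .head hxv (.single hvb)) (fun hbv => .head hbv hvw)
    rcases tot₁ v b hvb with hv₁ | hv₁ <;> rcases tot₂ v b hvb with hv₂ | hv₂
    · exact hD_vb (.inl ⟨hv₁, hv₂⟩)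
    · exact (ih ⟨hv₁, hv₂⟩).imp_left (.head hxv)
    · exact (no_jump _ _ hxv hu.1 hu.2 hv₁ hv₂).elim
    · exact hD_vb (.inr ⟨hv₁, hv₂⟩)

lemma TwoDim.tcl_of_ucl_iff {D K : V → V → Prop} (hK : TwoDim K)
    (hD : ∀ a b, ucl D a b ↔ ucl K a b) (hacyc : Acyclic D) : TwoDim (tcl D) := by
  obtain ⟨L₁, L₂, h₁, h₂, hKL⟩ := hK
  have hDL : ∀ a b, ucl D a b ↔ ucl (fun x y => L₁ x y ∧ L₂ x y) a b := fun a b => by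
    rw [hD]; exact or_congr (hKL a b) (hKL b a)
  have hDL' : ∀ a b, ucl D a b ↔ ucl (fun x y => L₂ x y ∧ L₁ x y) a b := fun a b => by
    rw [hDL]; exact or_congr and_comm and_comm
  set P := tcl D
  let Q : V → V → Prop := fun a b => L₁ a b ∧ L₂ b a ∧ ¬ P a b ∧ ¬ P b a
  have hP : Transitive P := fun _ _ _ => Relation.TransGen.trans
  have hQ : Transitive Q := by
    rintro a b c ⟨hab₁, hba₂, hab, hba⟩ ⟨hbc₁, hcb₂, hbc, hcb⟩
    refine ⟨h₁.2.1 hab₁ hbc₁, h₂.2.1 hcb₂ hba₂, fun hac => ?_, fun hca => ?_⟩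
    · exact (tcl_crossing h₁ h₂ hDL hac ⟨hab₁, hba₂⟩ ⟨hbc₁, hcb₂⟩).elim hab hbc
    · exact (tcl_crossing h₂ h₁ hDL' hca ⟨hcb₂, hbc₁⟩ ⟨hba₂, hab₁⟩).elim hcb hba
  have hQirr : Irreflexive Q := fun a h => h₁.1 a h.1
  have hdisj : ∀ a b, P a b → ¬ Q a b ∧ ¬ Q b a := fun a b h => ⟨fun h' => h'.2.2.1 h,
    fun h' => h'.2.2.2 h⟩
  have hcov : ∀ a b, a ≠ b → P a b ∨ P b a ∨ Q a b ∨ Q b a := by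
    intro a b hne
    by_cases hab : P a b
    · exact .inl hab
    by_cases hba : P b a
    · exact .inr (.inl hba)
    have hL : ¬ (L₁ a b ∧ L₂ a b) ∧ ¬ (L₁ b a ∧ L₂ b a) := not_or.1 fun h =>
      ((hDL a b).2 h).elim (hab ∘ .single) (hba ∘ .single)
    rcases h₁.2.2 a b hne with h | h <;> rcases h₂.2.2 a b hne with h' | h'
    · exact (hL.1 ⟨h, h'⟩).elim
    · exact .inr (.inr (.inl ⟨h, h', hab, hba⟩))
    · exact .inr (.inr (.inr ⟨h, h', hba, hab⟩))
    · exact (hL.2 ⟨h, h'⟩).elim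
  refine ⟨_, _, isStrictLinear_sup hP hacyc hQ hQirr hdisj hcov,
    isStrictLinear_sup (Q := flip Q) hP hacyc (fun _ _ _ hab hbc => hQ hbc hab) hQirr
      (fun a b h => (hdisj a b h).symm)
      (fun a b hne => (hcov a b hne).imp_right (Or.imp_right Or.symm)),
    fun a b => ⟨fun h => ⟨.inl h, .inl h⟩, ?_⟩⟩
  rintro ⟨h | h, h' | h'⟩
  exacts [h, h, h', (hQirr a (hQ h h')).elim]

lemma PermSubgraph.exists_twoDimSubgraph {G T : V → V → Prop} (hacyc : Acyclic G)
    (htrans : TransD G) (hT : PermSubgraph (ucl G) T) :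
    ∃ S, TwoDimSubgraph G S ∧ ∀ a b, T a b → ucl S a b := by
  obtain ⟨hTG, hperm⟩ := hT
  obtain ⟨K, hK, hTK⟩ := hperm.exists_twoDim
  have hsymm : ∀ a b, T a b → T b a := hperm.2.1
  let D : V → V → Prop := fun a b => G a b ∧ T a b
  have hDT : ∀ a b, ucl D a b ↔ T a b := fun a b =>
    ⟨fun h => h.elim And.right fun h => hsymm b a h.2,
      fun h => (hTG a b h).imp (⟨·, h⟩) (⟨·, hsymm a b h⟩)⟩
  have : IsTrans V G := ⟨htrans.transitive hacyc.oriented⟩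
  have hDG : ∀ a b, tcl D a b → G a b := Relation.transGen_minimal fun _ _ => And.left
  have hDacyc : Acyclic D := fun a h => hacyc.oriented.irreflexive a (hDG a a h)
  refine ⟨tcl D, ⟨hDG, hDacyc, fun _ _ _ hab hbc _ => hab.trans hbc, ?_,
    hK.tcl_of_ucl_iff (fun a b => (hDT a b).trans (hTK a b)) hDacyc⟩, fun a b h => ?_⟩
  · show Irreflexive (Relation.TransGen (Relation.TransGen D))
    rw [Relation.transGen_eq_self]
    exact hDacyc
  · exact ((hDT a b).2 h).imp .single .single

end PermToTwoDim

theorem maximal_two_dim_iff_maximal_permutation_general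
    {V : Type*} (G S : V → V → Prop)
    (hacyc : Acyclic G) (htrans : TransD G)
    (hsub : ∀ a b, S a b → G a b) :
    (TwoDimSubgraph G S ∧
      ∀ S' : V → V → Prop, TwoDimSubgraph G S' →
        (∀ a b, S a b → S' a b) → ∀ a b, S' a b → S a b) ↔
    (PermSubgraph (ucl G) (ucl S) ∧
      ∀ T : V → V → Prop, PermSubgraph (ucl G) T →
        (∀ a b, ucl S a b → T a b) → ∀ a b, T a b → ucl S a b) := by
  have hG := hacyc.oriented
  constructor
  · rintro ⟨hS, hmax⟩
    refine ⟨hS.permSubgraph_ucl, fun T hT hST a b hab => ?_⟩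
    obtain ⟨S', hS', hTS'⟩ := hT.exists_twoDimSubgraph hacyc htrans
    have hS'S := hmax S' hS' (le_of_ucl_le hG hsub hS'.1 fun x y h => hTS' x y (hST x y h))
    exact (hTS' a b hab).imp (hS'S a b) (hS'S b a)
  · rintro ⟨hS, hmax⟩
    obtain ⟨S', hS', hSS'⟩ := hS.exists_twoDimSubgraph hacyc htrans
    have hS'S := hmax _ hS'.permSubgraph_ucl hSS'
    obtain rfl : S = S' := funext₂ fun a b => propext
      ⟨le_of_ucl_le hG hsub hS'.1 hSS' a b, le_of_ucl_le hG hS'.1 hsub hS'S a b⟩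
    exact ⟨hS', fun S'' hS'' hSS'' => le_of_ucl_le hG hS''.1 hsub
      (hmax _ hS''.permSubgraph_ucl fun x y => Or.imp (hSS'' x y) (hSS'' y x))⟩

theorem maximal_two_dim_iff_maximal_permutation
    {V : Type*} [Fintype V] (G S : V → V → Prop)
    (hirr : Irreflexive G) (hacyc : Acyclic G) (htrans : TransD G)
    (hsub : ∀ a b, S a b → G a b) :
    (TwoDimSubgraph G S ∧
      ∀ S' : V → V → Prop, TwoDimSubgraph G S' →
        (∀ a b, S a b → S' a b) → ∀ a b, S' a b → S a b) ↔
    (PermSubgraph (ucl G) (ucl S) ∧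
      ∀ T : V → V → Prop, PermSubgraph (ucl G) T →
        (∀ a b, ucl S a b → T a b) → ∀ a b, T a b → ucl S a b) :=
  maximal_two_dim_iff_maximal_permutation_general G S hacyc htrans hsub
end

section
/- Let G be an undirected transitively orientable graph on a finite vertex set V and let S be a locally maximal permutation subgraph of G, i.e., an undirected subgraph of G that is a permutation graph and is not strictly contained in any undirected subgraph of G that is a permutation graph. Then there exists an orientation H of the complement of G such that S = G \ ucl(tcl(H)). -/
/-!
Fix a transitive orientation `Q` of `G` and any orientation `H` of the complement of `G` whose
transitive closure `P` is oriented. Removing from `G` all pairs comparable under `P` leaves a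
permutation graph: its complement is transitively oriented by `P`, and `Q` restricted to it stays
transitive, because whenever `a <_Q b <_Q c` and `a <_P c`, following the `H`-path from `a` to `c`
while keeping its vertices `Q`-below `b` forces `a <_P b` or `b <_P c`.

For the theorem, take `P` inside a transitive orientation of the complement of `S`; then `S` avoids
all `P`-comparable pairs, so `S` lies in the permutation subgraph above and equals it by maximality.
-/

section Orientations

variable {V : Type*} {E F O : V → V → Prop}

lemma Oriented.irrefl (hO : Oriented O) (a : V) : ¬ O a a :=
  fun h => hO a a h h

lemma Oriented.mono (hE : Oriented E) (hle : O ≤ E) : Oriented O :=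
  fun a b hab hba => hE a b (hle a b hab) (hle b a hba)

lemma Oriented.isTrans (hO : Oriented O) (htr : TransD O) : IsTrans V O := by
  refine ⟨fun a b c hab hbc => htr a b c hab hbc ?_⟩
  rintro rfl
  exact hO a b hab hbc

lemma IsOrientation.of_covers (hle : O ≤ E) (hO : Oriented O)
    (hcov : ∀ a b, E a b → O a b ∨ O b a) : IsOrientation O E := by
  refine ⟨hle, hO, fun O' hle' hO' hge a b hab => ?_⟩
  rcases hcov a b (hle' a b hab) with h | h
  · exact h
  · exact absurd (hge b a h) (hO' a b hab)

lemma IsOrientation.or_swap (hO : IsOrientation O E) {a b : V} (hab : E a b) (hne : a ≠ b) :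
    O a b ∨ O b a := by
  by_contra! h
  let O' : V → V → Prop := fun x y => O x y ∨ (x = a ∧ y = b)
  have hle' : O' ≤ E := by
    rintro x y (hxy | ⟨rfl, rfl⟩)
    exacts [hO.1 x y hxy, hab]
  have hO' : Oriented O' := by
    rintro x y (hxy | ⟨rfl, rfl⟩) (hyx | hyx)
    · exact hO.2.1 x y hxy hyx
    · obtain ⟨rfl, rfl⟩ := hyx
      exact h.2 hxy
    · exact h.2 hyx
    · exact hne hyx.2
  exact h.1 (hO.2.2 O' hle' hO' (fun x y => Or.inl) a b (Or.inr ⟨rfl, rfl⟩))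

lemma IsOrientation.swap (hO : IsOrientation O E) (hE : ∀ a b, E a b → E b a) :
    IsOrientation (Function.swap O) E := by
  refine ⟨fun a b h => hE _ _ (hO.1 b a h), fun a b h h' => hO.2.1 a b h' h, ?_⟩
  intro O' hle' hO' hge a b hab
  exact hO.2.2 (Function.swap O') (fun x y h => hE _ _ (hle' y x h)) (fun x y h h' => hO' y x h h')
    (fun x y h => hge y x h) b a hab

lemma IsTransOrientation.swap (hO : IsTransOrientation O E) (hE : ∀ a b, E a b → E b a) :
    IsTransOrientation (Function.swap O) E :=
  ⟨hO.1.swap hE, fun a b c hab hbc hac => hO.2 c b a hbc hab hac.symm⟩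

lemma IsOrientation.restrict (hO : IsOrientation O E) (hF : ∀ a b, F a b → F b a)
    (hle : F ≤ E) : IsOrientation (F ⊓ O) F := by
  refine ⟨fun a b h => h.1, fun a b h h' => hO.2.1 a b h.2 h'.2, ?_⟩
  intro O' hle' hO' hge a b hab
  have hne : a ≠ b := by
    rintro rfl
    exact hO'.irrefl a hab
  rcases hO.or_swap (hle a b (hle' a b hab)) hne with h | h
  · exact ⟨hle' a b hab, h⟩
  · exact absurd (hge b a ⟨hF _ _ (hle' a b hab), h⟩) (hO' a b hab)

end Orientations

section Complement

variable {V : Type*} {G S : V → V → Prop}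

lemma cmpl_symm (a b : V) (h : cmpl G a b) : cmpl G b a :=
  ⟨h.1.symm, fun hu => h.2 hu.symm⟩

lemma cmpl_anti (hle : S ≤ G) : cmpl G ≤ cmpl S :=
  fun a b h => ⟨h.1, fun hu => h.2 (hu.imp (hle a b) (hle b a))⟩

lemma cmpl_of_not (hG : ∀ a b, G a b → G b a) {a b : V} (hne : a ≠ b) (h : ¬ G a b) :
    cmpl G a b :=
  ⟨hne, fun hu => hu.elim h fun h' => h (hG _ _ h')⟩

end Complement

section RemoveComparable

variable {V : Type*} {G H P Q S : V → V → Prop}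

def removeComparable (G P : V → V → Prop) : V → V → Prop :=
  fun a b => G a b ∧ ¬ ucl P a b

lemma removeComparable_le : removeComparable G P ≤ G :=
  fun _ _ h => h.1

lemma removeComparable_symm (hG : ∀ a b, G a b → G b a) :
    ∀ a b, removeComparable G P a b → removeComparable G P b a :=
  fun _ _ h => ⟨hG _ _ h.1, fun hu => h.2 hu.symm⟩

lemma le_removeComparable (hle : S ≤ G) (hP : P ≤ cmpl S) : S ≤ removeComparable G P := by
  refine fun a b hab => ⟨hle a b hab, ?_⟩
  rintro (h | h)
  · exact (hP a b h).2 (Or.inl hab)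
  · exact (hP b a h).2 (Or.inr hab)

lemma tcl_left_or_right_of_between (hG : ∀ a b, G a b → G b a) (hQ : IsTransOrientation Q G)
    (hH : IsOrientation H (cmpl G)) {a b c : V} (hab : Q a b) (hbc : Q b c) (hac : tcl H a c) :
    tcl H a b ∨ tcl H b c := by
  by_contra! h
  suffices key : ∀ x, tcl H x c → Q x b → tcl H x b from h.1 (key a hac hab)
  have not_Q_of_H : ∀ {x y}, H x y → ¬ Q x y := fun hxy hq =>
    (hH.1 _ _ hxy).2 (Or.inl (hQ.1.1 _ _ hq))
  intro x hxc
  induction hxc using Relation.TransGen.head_induction_on with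
  | single hxc =>
    intro hxb
    exact absurd (hQ.2 _ _ _ hxb hbc (hH.1 _ _ hxc).1) (not_Q_of_H hxc)
  | @head x y hxy hyc ih =>
    intro hxb
    by_cases hyb : y = b
    · subst hyb
      exact .single hxy
    by_cases hGyb : G y b
    · rcases hQ.1.or_swap hGyb hyb with hyb' | hby
      · exact .head hxy (ih hyb')
      · exact absurd (hQ.2 _ _ _ hxb hby (hH.1 _ _ hxy).1) (not_Q_of_H hxy)
    · rcases hH.or_swap (cmpl_of_not hG hyb hGyb) hyb with hyb' | hby
      · exact .head hxy (.single hyb')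
      · exact absurd (.head hby hyc) h.2

lemma isTransOrientation_removeComparable (hG : ∀ a b, G a b → G b a)
    (hQ : IsTransOrientation Q G) (hH : IsOrientation H (cmpl G)) :
    IsTransOrientation (removeComparable G (tcl H) ⊓ Q) (removeComparable G (tcl H)) := by
  refine ⟨hQ.1.restrict (removeComparable_symm hG) removeComparable_le, ?_⟩
  rintro a b c ⟨⟨-, hab⟩, qab⟩ ⟨⟨-, hbc⟩, qbc⟩ hne
  have qac := hQ.2 a b c qab qbc hne
  refine ⟨⟨hQ.1.1 a c qac, ?_⟩, qac⟩
  rintro (hac | hca)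
  · rcases tcl_left_or_right_of_between hG hQ hH qab qbc hac with h | h
    exacts [hab (Or.inl h), hbc (Or.inl h)]
  · rcases tcl_left_or_right_of_between hG (hQ.swap hG) hH qbc qab hca with h | h
    exacts [hbc (Or.inr h), hab (Or.inr h)]

lemma isTransOrientation_tcl_cmpl_removeComparable (hG : ∀ a b, G a b → G b a)
    (hH : IsOrientation H (cmpl G)) (hP : Oriented (tcl H)) :
    IsTransOrientation (tcl H) (cmpl (removeComparable G (tcl H))) := by
  refine ⟨.of_covers ?_ hP ?_, fun a b c h h' _ => Relation.TransGen.trans h h'⟩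
  · intro a b hab
    refine ⟨fun he => hP.irrefl a (he ▸ hab), ?_⟩
    rintro (h | h)
    exacts [h.2 (Or.inl hab), h.2 (Or.inr hab)]
  · rintro a b ⟨hne, hn⟩
    by_cases hGab : G a b
    · by_contra! h
      exact hn (Or.inl ⟨hGab, fun hu => hu.elim h.1 h.2⟩)
    · exact (hH.or_swap (cmpl_of_not hG hne hGab) hne).imp .single .single

theorem permSubgraph_removeComparable (hirr : ∀ a, ¬ G a a) (hG : ∀ a b, G a b → G b a)
    (hto : TransOrientable G) (hH : IsOrientation H (cmpl G)) (hP : Oriented (tcl H)) :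
    PermSubgraph G (removeComparable G (tcl H)) := by
  obtain ⟨Q, hQ⟩ := hto
  exact ⟨removeComparable_le, fun a h => hirr a h.1, removeComparable_symm hG,
    ⟨_, isTransOrientation_removeComparable hG hQ hH⟩,
    ⟨_, isTransOrientation_tcl_cmpl_removeComparable hG hH hP⟩⟩

end RemoveComparable

theorem maximal_permutation_subgraph_is_induced_general
    {V : Type*} (G S : V → V → Prop)
    (hirr : Irreflexive G) (hund : ∀ a b, G a b → G b a)
    (hto : TransOrientable G)
    (hS : PermSubgraph G S)
    (hmax : ∀ T : V → V → Prop, PermSubgraph G T →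
      (∀ a b, S a b → T a b) → ∀ a b, T a b → S a b) :
    ∃ H : V → V → Prop, IsOrientation H (cmpl G) ∧
      ∀ a b, S a b ↔ G a b ∧ ¬ ucl (tcl H) a b := by
  obtain ⟨hSG, -, -, -, F, hF, hFtr⟩ := hS
  have hH : IsOrientation (cmpl G ⊓ F) (cmpl G) := hF.restrict cmpl_symm (cmpl_anti hSG)
  have hPF : tcl (cmpl G ⊓ F) ≤ F := by
    have := hF.2.1.isTrans hFtr
    exact Relation.transGen_minimal fun _ _ h => h.2
  have hST : S ≤ removeComparable G (tcl (cmpl G ⊓ F)) :=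
    le_removeComparable hSG (hPF.trans hF.1)
  have hT := permSubgraph_removeComparable hirr hund hto hH (hF.2.1.mono hPF)
  exact ⟨_, hH, fun a b => ⟨hST a b, hmax _ hT hST a b⟩⟩

theorem maximal_permutation_subgraph_is_induced
    {V : Type*} [Fintype V] (G S : V → V → Prop)
    (hirr : Irreflexive G) (hund : ∀ a b, G a b → G b a)
    (hto : TransOrientable G)
    (hS : PermSubgraph G S)
    (hmax : ∀ T : V → V → Prop, PermSubgraph G T →
      (∀ a b, S a b → T a b) → ∀ a b, T a b → S a b) :
    ∃ H : V → V → Prop, IsOrientation H (cmpl G) ∧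
      ∀ a b, S a b ↔ G a b ∧ ¬ ucl (tcl H) a b :=
  maximal_permutation_subgraph_is_induced_general G S hirr hund hto hS hmax
end
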